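/- arXiv:1010.6038 — 3 statements merged into one kernel-verified Lean document; each statement's English description precedes it below -/
import Mathlib

section
/- Let A be a complete discrete valuation ring in which 2 is invertible, with fraction field K and residue field k, and uniformizer π. Let α₁,...,α_r and β₁,...,β_s be units of A. Then the quadratic form ⟨α₁,...,α_r⟩ ⊥ π·⟨β₁,...,β_s⟩ over K is anisotropic if and only if both residue forms ⟨ᾱ₁,...,ᾱ_r⟩ and ⟨β̄₁,...,β̄_s⟩ are anisotropic over k. -/
/-!
An isotropic vector of a residue form lifts to a vector over `A` with a unit coordinate; as `2` is
invertible, Hensel's lemma for `X² - c` corrects that coordinate to an exact zero over `A`, and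
setting the other block of variables to `0` gives a zero of `⟨α⟩ ⊥ π⟨β⟩` over `K`.

Conversely, if both residue forms are anisotropic, a zero over `K` can be scaled into `A`. Reducing
modulo `π` shows that `π` divides every `aᵢ`; dividing the equation by `π` exchanges the roles of the
two blocks, so `π` divides every `bⱼ` as well, and `(a/π, b/π)` is again a zero. Hence every
coordinate is divisible by all powers of `π`, i.e. vanishes.
-/

open IsLocalRing Polynomial

theorem exists_sq_eq_of_sub_sq_mem_maximalIdeal {A : Type*} [CommRing A] [IsLocalRing A]
    [HenselianRing A (maximalIdeal A)] (h2 : IsUnit (2 : A)) {a t₀ : A} (ht₀ : IsUnit t₀)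
    (h : a - t₀ ^ 2 ∈ maximalIdeal A) : ∃ t, t ^ 2 = a ∧ t - t₀ ∈ maximalIdeal A := by
  have hf : (X ^ 2 - C a).eval t₀ ∈ maximalIdeal A := by
    simpa using neg_mem h
  have hf' : (X ^ 2 - C a).derivative.eval t₀ = 2 * t₀ := by simp [one_add_one_eq_two]
  obtain ⟨t, ht, htt₀⟩ := HenselianRing.is_henselian _ (monic_X_pow_sub_C a two_ne_zero) t₀ hf
    (hf' ▸ (h2.mul ht₀).map _)
  exact ⟨t, by simpa [sub_eq_zero] using ht, htt₀⟩

theorem sum_mul_update_sq {R ι : Type*} [CommRing R] [Fintype ι] [DecidableEq ι]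
    (w a : ι → R) (i₀ : ι) (t : R) :
    ∑ i, w i * Function.update a i₀ t i ^ 2 = ∑ i, w i * a i ^ 2 + w i₀ * (t ^ 2 - a i₀ ^ 2) := by
  rw [← sub_eq_iff_eq_add', ← Finset.sum_sub_distrib, Finset.sum_eq_single i₀]
  · simp [mul_sub]
  · intro i _ hi
    simp [Function.update_of_ne hi]
  · simp

theorem exists_isUnit_sum_mul_update_sq_eq_zero {A ι : Type*} [CommRing A] [IsLocalRing A]
    [HenselianRing A (maximalIdeal A)] [Fintype ι] [DecidableEq ι] (h2 : IsUnit (2 : A))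
    (u : ι → Aˣ) {a : ι → A} (ha : ∑ i, (u i : A) * a i ^ 2 ∈ maximalIdeal A) {i₀ : ι}
    (hi₀ : IsUnit (a i₀)) : ∃ t, IsUnit t ∧ ∑ i, (u i : A) * Function.update a i₀ t i ^ 2 = 0 := by
  set S := ∑ i, (u i : A) * a i ^ 2
  obtain ⟨t, ht, htt₀⟩ := exists_sq_eq_of_sub_sq_mem_maximalIdeal h2 hi₀
    (a := a i₀ ^ 2 - ↑(u i₀)⁻¹ * S) (by simpa using neg_mem (Ideal.mul_mem_left _ ↑(u i₀)⁻¹ ha))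
  have hres : residue A t = residue A (a i₀) := by
    rwa [← sub_eq_zero, ← map_sub, residue_eq_zero_iff]
  refine ⟨t, (isUnit_map_iff (residue A) t).mp (hres ▸ hi₀.map _), ?_⟩
  rw [sum_mul_update_sq, ht]
  linear_combination (-S) * (u i₀).mul_inv

theorem exists_ne_zero_sum_mul_sq_eq_zero_of_residue {A ι : Type*} [CommRing A] [IsLocalRing A]
    [HenselianRing A (maximalIdeal A)] [Fintype ι] (h2 : IsUnit (2 : A)) (u : ι → Aˣ)
    {x : ι → ResidueField A} (hx0 : x ≠ 0) (hx : ∑ i, residue A (u i) * x i ^ 2 = 0) :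
    ∃ a : ι → A, a ≠ 0 ∧ ∑ i, (u i : A) * a i ^ 2 = 0 := by
  classical
  obtain ⟨i₀, hi₀⟩ := Function.ne_iff.mp hx0
  choose a ha using fun i => residue_surjective (x i)
  have hS : ∑ i, (u i : A) * a i ^ 2 ∈ maximalIdeal A :=
    (residue_eq_zero_iff _).mp (by simpa [ha] using hx)
  have hunit : IsUnit (a i₀) := by
    rw [← isUnit_map_iff (residue A), ha]
    exact hi₀.isUnit
  obtain ⟨t, ht, hsum⟩ := exists_isUnit_sum_mul_update_sq_eq_zero h2 u hS hunit
  exact ⟨_, Function.ne_iff.mpr ⟨i₀, by simpa using ht.ne_zero⟩, hsum⟩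

theorem exists_ne_zero_sum_algebraMap_mul_sq_eq_zero_of_residue {A K ι : Type*} [CommRing A]
    [IsLocalRing A] [HenselianRing A (maximalIdeal A)] [Semiring K] [Algebra A K]
    [FaithfulSMul A K] [Fintype ι] (h2 : IsUnit (2 : A)) (u : ι → Aˣ) {x : ι → ResidueField A}
    (hx0 : x ≠ 0) (hx : ∑ i, residue A (u i) * x i ^ 2 = 0) :
    ∃ z : ι → K, z ≠ 0 ∧ ∑ i, algebraMap A K (u i) * z i ^ 2 = 0 := by
  obtain ⟨a, ha0, ha⟩ := exists_ne_zero_sum_mul_sq_eq_zero_of_residue h2 u hx0 hx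
  refine ⟨algebraMap A K ∘ a, fun h => ha0 ?_, by simp [← map_pow, ← map_mul, ← map_sum, ha]⟩
  exact funext fun i => FaithfulSMul.algebraMap_injective A K (by simpa using congrFun h i)

theorem sum_mul_smul_sq {R ι : Type*} [CommRing R] [Fintype ι] (w a : ι → R) (c : R) :
    ∑ i, w i * (c • a) i ^ 2 = c ^ 2 * ∑ i, w i * a i ^ 2 := by
  rw [Finset.mul_sum]
  exact Finset.sum_congr rfl fun i _ => by simp only [Pi.smul_apply, smul_eq_mul]; ring

theorem eq_zero_of_sum_algebraMap_mul_sq_eq_zero {A K ι : Type*} [CommRing A] [Nontrivial A]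
    [Field K] [Algebra A K] [IsFractionRing A K] [Fintype ι] {w : ι → A}
    (hw : ∀ a : ι → A, ∑ i, w i * a i ^ 2 = 0 → a = 0) {x : ι → K}
    (hx : ∑ i, algebraMap A K (w i) * x i ^ 2 = 0) : x = 0 := by
  obtain ⟨d, hd⟩ := IsLocalization.exist_integer_multiples_of_finite (nonZeroDivisors A) x
  choose a ha using hd
  have hd0 : algebraMap A K d ≠ 0 :=
    IsFractionRing.to_map_ne_zero_of_mem_nonZeroDivisors d.2
  have hxa : algebraMap A K d • x = algebraMap A K ∘ a := by
    ext i
    simp [ha, Algebra.smul_def]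
  have ha0 : a = 0 := by
    have h : ∑ i, algebraMap A K (w i) * (algebraMap A K d • x) i ^ 2 = 0 := by
      rw [sum_mul_smul_sq, hx, mul_zero]
    rw [hxa] at h
    exact hw a <| IsFractionRing.injective A K <| by simpa using h
  rw [ha0] at hxa
  exact (smul_eq_zero.mp (hxa.trans (by ext; simp))).resolve_left hd0

theorem uniformizer_dvd_of_dvd_sum_mul_sq {A ι : Type*} [CommRing A] [IsDomain A]
    [IsDiscreteValuationRing A] [Fintype ι] {π : A} (hπ : Irreducible π) {u : ι → A}
    (hu : ∀ x : ι → ResidueField A, ∑ i, residue A (u i) * x i ^ 2 = 0 → x = 0) {a : ι → A}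
    (ha : π ∣ ∑ i, u i * a i ^ 2) (i : ι) : π ∣ a i := by
  have hres : ∀ c, residue A c = 0 ↔ π ∣ c := by
    simp [residue_eq_zero_iff, (IsDiscreteValuationRing.irreducible_iff_uniformizer π).mp hπ,
      Ideal.mem_span_singleton]
  rw [← hres] at ha ⊢
  exact congrFun (hu _ (by simpa using ha)) i

section Descent

variable {A ι κ : Type*} [CommRing A] [IsDomain A] [IsDiscreteValuationRing A]
  [Fintype ι] [Fintype κ] {π : A} (hπ : Irreducible π) {α : ι → A} {β : κ → A}
  (hα : ∀ x : ι → ResidueField A, ∑ i, residue A (α i) * x i ^ 2 = 0 → x = 0)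
  (hβ : ∀ y : κ → ResidueField A, ∑ j, residue A (β j) * y j ^ 2 = 0 → y = 0)
include hπ hα hβ

theorem exists_eq_uniformizer_smul_of_form_eq_zero {a : ι → A} {b : κ → A}
    (h : ∑ i, α i * a i ^ 2 + π * ∑ j, β j * b j ^ 2 = 0) :
    ∃ a' b', a = π • a' ∧ b = π • b' ∧ ∑ i, α i * a' i ^ 2 + π * ∑ j, β j * b' j ^ 2 = 0 := by
  obtain ⟨a', rfl⟩ : ∃ a', a = π • a' := by
    choose a' ha' using uniformizer_dvd_of_dvd_sum_mul_sq hπ hα (a := a)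
      ⟨-∑ j, β j * b j ^ 2, by linear_combination h⟩
    exact ⟨a', funext ha'⟩
  rw [sum_mul_smul_sq] at h
  have h' : π * ∑ i, α i * a' i ^ 2 + ∑ j, β j * b j ^ 2 = 0 :=
    mul_left_cancel₀ hπ.ne_zero (by linear_combination h)
  obtain ⟨b', rfl⟩ : ∃ b', b = π • b' := by
    choose b' hb' using uniformizer_dvd_of_dvd_sum_mul_sq hπ hβ (a := b)
      ⟨-∑ i, α i * a' i ^ 2, by linear_combination h'⟩
    exact ⟨b', funext hb'⟩
  rw [sum_mul_smul_sq] at h'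
  exact ⟨a', b', rfl, rfl, mul_left_cancel₀ hπ.ne_zero (by linear_combination h')⟩

theorem exists_eq_uniformizer_pow_smul_of_form_eq_zero (n : ℕ) {a : ι → A} {b : κ → A}
    (h : ∑ i, α i * a i ^ 2 + π * ∑ j, β j * b j ^ 2 = 0) :
    ∃ a' b', a = π ^ n • a' ∧ b = π ^ n • b' := by
  induction n generalizing a b with
  | zero => exact ⟨a, b, by simp, by simp⟩
  | succ n ih =>
    obtain ⟨a', b', rfl, rfl, h'⟩ := exists_eq_uniformizer_smul_of_form_eq_zero hπ hα hβ h
    obtain ⟨a'', b'', rfl, rfl⟩ := ih h'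
    exact ⟨a'', b'', by rw [smul_smul, pow_succ'], by rw [smul_smul, pow_succ']⟩

theorem eq_zero_of_form_eq_zero {a : ι → A} {b : κ → A}
    (h : ∑ i, α i * a i ^ 2 + π * ∑ j, β j * b j ^ 2 = 0) : a = 0 ∧ b = 0 := by
  have hzero : ∀ c : A, (∀ n, π ^ n ∣ c) → c = 0 := fun c hc => by_contra fun hc0 =>
    FiniteMultiplicity.not_iff_forall.mpr hc (.of_not_isUnit hπ.not_isUnit hc0)
  have hpow n := exists_eq_uniformizer_pow_smul_of_form_eq_zero hπ hα hβ n h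
  refine ⟨funext fun i => hzero _ fun n => ?_, funext fun j => hzero _ fun n => ?_⟩
  · obtain ⟨a', -, rfl, -⟩ := hpow n
    exact ⟨a' i, rfl⟩
  · obtain ⟨-, b', -, rfl⟩ := hpow n
    exact ⟨b' j, rfl⟩

end Descent

/-- **Springer's lemma.** Let `A` be a complete discrete valuation ring in which `2` is
invertible, with fraction field `K` and residue field `k`, and uniformizer `π`. Let
`α₁, …, α_r` and `β₁, …, β_s` be units of `A`. Then the diagonal quadratic form
`⟨α₁,…,α_r⟩ ⊥ π·⟨β₁,…,β_s⟩` over `K` is anisotropic if and only if both residue forms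
`⟨ᾱ₁,…,ᾱ_r⟩` and `⟨β̄₁,…,β̄_s⟩` are anisotropic over `k`. -/
theorem springer_lemma
    (A : Type) [CommRing A] [IsDomain A] [IsDiscreteValuationRing A]
    [IsAdicComplete (IsLocalRing.maximalIdeal A) A]
    (h2 : IsUnit (2 : A))
    (K : Type) [Field K] [Algebra A K] [IsFractionRing A K]
    (π : A) (hπ : Irreducible π)
    (r s : ℕ) (α : Fin r → Aˣ) (β : Fin s → Aˣ) :
    (∀ (x : Fin r → K) (y : Fin s → K),
        (∑ i, algebraMap A K (α i) * x i ^ 2)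
          + algebraMap A K π * ∑ j, algebraMap A K (β j) * y j ^ 2 = 0 →
        x = 0 ∧ y = 0)
    ↔ ((∀ x : Fin r → IsLocalRing.ResidueField A,
          ∑ i, IsLocalRing.residue A (α i) * x i ^ 2 = 0 → x = 0)
        ∧ (∀ y : Fin s → IsLocalRing.ResidueField A,
          ∑ j, IsLocalRing.residue A (β j) * y j ^ 2 = 0 → y = 0)) := by
  constructor
  · intro H
    refine ⟨fun x hx => by_contra fun hx0 => ?_, fun y hy => by_contra fun hy0 => ?_⟩
    · obtain ⟨z, hz0, hz⟩ :=
        exists_ne_zero_sum_algebraMap_mul_sq_eq_zero_of_residue (K := K) h2 α hx0 hx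
      exact hz0 (H z 0 (by simp [hz])).1
    · obtain ⟨z, hz0, hz⟩ :=
        exists_ne_zero_sum_algebraMap_mul_sq_eq_zero_of_residue (K := K) h2 β hy0 hy
      exact hz0 (H 0 z (by simp [hz])).2
  · rintro ⟨hα, hβ⟩ x y hxy
    have hxy0 := eq_zero_of_sum_algebraMap_mul_sq_eq_zero (x := Sum.elim x y)
      (w := Sum.elim (fun i => (α i : A)) (fun j => π * β j)) (fun c hc => ?_)
      (by simpa [Fintype.sum_sum_type, Finset.mul_sum, mul_assoc] using hxy)
    · exact ⟨funext fun i => congrFun hxy0 (.inl i), funext fun j => congrFun hxy0 (.inr j)⟩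
    · have := eq_zero_of_form_eq_zero hπ hα hβ (a := c ∘ Sum.inl) (b := c ∘ Sum.inr)
        (by simpa [Fintype.sum_sum_type, Finset.mul_sum, mul_assoc] using hc)
      ext (i | j)
      exacts [congrFun this.1 i, congrFun this.2 j]
end

section
/- Let L be a field of characteristic ≠ 2, let d ∈ L× be a non-square, and set L' = L(√d). Let q be a rank 4 nondegenerate quadratic form over L with determinant class d modulo squares. If q becomes isotropic over L', then q is isotropic over L. -/
/-!
Write an isotropic vector over `L' = L ⊕ L s` as `u + v s` with `u, v` over `L`; the
`1`- and `s`-components of `q(u + v s) = 0` say `q(u) + d q(v) = 0` and `u ⟂ v`. If `q(u) = 0`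
then `u`, or `v` when `u = 0`, is isotropic, so let `α = q(u) ≠ 0`. Completing `u, v` to an orthogonal family `u, v, w₁, w₂`
(done unless `w₁` or `w₂` is isotropic), the Gram determinant gives
`α · (-α/d) · q(w₁) · q(w₂) ≡ det q ≡ d` modulo squares, so `-q(w₁) q(w₂)` is a square
and the binary form `⟨q(w₁), q(w₂)⟩` is a hyperbolic plane.
-/

open Matrix

section DiagonalForm

variable {R : Type*} [CommRing R] {ι : Type*} [Fintype ι]

def diagForm (a x : ι → R) : R := ∑ i, a i * x i ^ 2

def diagPolar (a x y : ι → R) : R := ∑ i, a i * x i * y i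

theorem diagPolar_comm (a x y : ι → R) : diagPolar a x y = diagPolar a y x :=
  Finset.sum_congr rfl fun _ _ => by ring

theorem diagPolar_self (a x : ι → R) : diagPolar a x x = diagForm a x :=
  Finset.sum_congr rfl fun _ _ => by ring

theorem diagPolar_add_smul_left (a x y z : ι → R) (t : R) :
    diagPolar a (x + t • y) z = diagPolar a x z + t * diagPolar a y z := by
  simp only [diagPolar, Finset.mul_sum, ← Finset.sum_add_distrib]
  exact Finset.sum_congr rfl fun i _ => by
    simp only [Pi.add_apply, Pi.smul_apply, smul_eq_mul]; ring

theorem diagForm_add_smul (a x y : ι → R) (t : R) :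
    diagForm a (x + t • y) =
      diagForm a x + 2 * t * diagPolar a x y + t ^ 2 * diagForm a y := by
  simp only [diagForm, diagPolar, Finset.mul_sum, ← Finset.sum_add_distrib]
  exact Finset.sum_congr rfl fun i _ => by
    simp only [Pi.add_apply, Pi.smul_apply, smul_eq_mul]; ring

theorem diagForm_algebraMap_add_mul {A : Type*} [CommRing A] [Algebra R A] (a u v : ι → R)
    {d : R} {s : A} (hs : s ^ 2 = algebraMap R A d) :
    diagForm (algebraMap R A ∘ a) (fun i => algebraMap R A (u i) + algebraMap R A (v i) * s) =
      algebraMap R A (diagForm a u + d * diagForm a v) +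
        algebraMap R A (2 * diagPolar a u v) * s := by
  simp only [diagForm, diagPolar, map_add, map_mul, map_sum, map_pow, map_ofNat,
    Finset.mul_sum, Finset.sum_mul, ← Finset.sum_add_distrib, Function.comp_apply]
  exact Finset.sum_congr rfl fun i _ => by
    linear_combination (algebraMap R A (a i) * algebraMap R A (v i) ^ 2) * hs

theorem prod_diagForm_eq_det_sq_mul_prod [DecidableEq ι] (a : ι → R) (w : ι → ι → R)
    (horth : Pairwise fun j k => diagPolar a (w j) (w k) = 0) :
    ∏ j, diagForm a (w j) = (of w).det ^ 2 * ∏ i, a i := by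
  have hgram : of w * diagonal a * (of w)ᵀ = diagonal fun j => diagForm a (w j) := by
    ext j k
    simp only [mul_apply, diagonal_apply, of_apply, transpose_apply, mul_ite, mul_zero,
      Finset.sum_ite_eq', Finset.mem_univ, if_true]
    rcases eq_or_ne j k with rfl | hjk
    · simp only [if_true, ← diagPolar_self]
      exact Finset.sum_congr rfl fun _ _ => by ring
    · simp only [hjk, if_false, ← horth hjk]
      exact Finset.sum_congr rfl fun _ _ => by ring
  have hdet := congrArg det hgram
  rw [det_mul, det_mul, det_transpose, det_diagonal, det_diagonal] at hdet
  rw [← hdet]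
  ring

theorem add_smul_isotropic_of_diagPolar_eq_zero {a x y : ι → R} (hxy : diagPolar a x y = 0)
    (hx : diagForm a x ≠ 0) {t : R} (ht : diagForm a x + t ^ 2 * diagForm a y = 0) :
    x + t • y ≠ 0 ∧ diagForm a (x + t • y) = 0 := by
  refine ⟨fun h => hx ?_, ?_⟩
  · calc diagForm a x = diagPolar a (x + t • y) x := by
          rw [diagPolar_add_smul_left, diagPolar_self, diagPolar_comm a y, hxy, mul_zero,
            add_zero]
      _ = 0 := by rw [h]; simp [diagPolar]
  · rw [diagForm_add_smul, hxy]
    linear_combination ht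

theorem exists_ne_zero_forall_diagPolar_eq_zero {K : Type*} [Field K] {k : ℕ}
    (hk : k < Fintype.card ι) (a : ι → K) (y : Fin k → ι → K) :
    ∃ w ≠ 0, ∀ j, diagPolar a (y j) w = 0 := by
  have hker := LinearMap.ker_ne_bot_of_finrank_lt
    (f := (of fun j i => a i * y j i).mulVecLin) (by simpa using hk)
  obtain ⟨w, hw, hw0⟩ := (Submodule.ne_bot_iff _).1 hker
  refine ⟨w, hw0, fun j => ?_⟩
  simpa [mulVec, dotProduct, diagPolar] using congrFun (LinearMap.mem_ker.1 hw) j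

end DiagonalForm

theorem exists_diagForm_eq_zero_of_orthogonal_pair {K : Type*} [Field K] {a : Fin 4 → K}
    {d c : K} (hdet : a 0 * a 1 * a 2 * a 3 = d * c ^ 2) {u v : Fin 4 → K}
    (hq : diagForm a u + d * diagForm a v = 0) (huv : diagPolar a u v = 0)
    (hu : diagForm a u ≠ 0) :
    ∃ x ≠ 0, diagForm a x = 0 := by
  obtain ⟨w₁, hw₁, hw₁o⟩ :=
    exists_ne_zero_forall_diagPolar_eq_zero (by simp) a ![u, v]
  by_cases hβ : diagForm a w₁ = 0
  · exact ⟨w₁, hw₁, hβ⟩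
  obtain ⟨w₂, hw₂, hw₂o⟩ :=
    exists_ne_zero_forall_diagPolar_eq_zero (by simp) a ![u, v, w₁]
  by_cases hγ : diagForm a w₂ = 0
  · exact ⟨w₂, hw₂, hγ⟩
  have horth :
      Pairwise fun j k => diagPolar a (![u, v, w₁, w₂] j) (![u, v, w₁, w₂] k) = 0 := by
    have h₁₃ := hw₁o 0
    have h₂₃ := hw₁o 1
    have h₁₄ := hw₂o 0
    have h₂₄ := hw₂o 1
    have h₃₄ := hw₂o 2
    intro j k hjk
    fin_cases j <;> fin_cases k <;> simp only [cons_val] at h₁₃ h₂₃ h₁₄ h₂₄ h₃₄ ⊢ <;>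
      first | exact absurd rfl hjk | assumption | (rw [diagPolar_comm]; assumption)
  have hgram := prod_diagForm_eq_det_sq_mul_prod a _ horth
  simp only [Fin.prod_univ_four, cons_val] at hgram
  set δ := (of ![u, v, w₁, w₂]).det
  have ht : diagForm a w₁ +
      (d * c * δ / (diagForm a u * diagForm a w₂)) ^ 2 * diagForm a w₂ = 0 := by
    field_simp
    linear_combination (diagForm a u * diagForm a w₁ * diagForm a w₂) * hq - d * hgram -
      d * δ ^ 2 * hdet
  exact ⟨_, add_smul_isotropic_of_diagPolar_eq_zero (hw₂o 2) hβ ht⟩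

section QuadraticExtension

variable {L L' : Type*} [Field L] [Field L'] [Algebra L L'] {s : L'}

theorem linearIndependent_one_of_notMem_range (hs : s ∉ Set.range (algebraMap L L')) :
    LinearIndependent L ![1, s] := by
  rw [LinearIndependent.pair_iff]
  intro p q h
  rcases eq_or_ne q 0 with rfl | hq
  · simpa using h
  · refine absurd ⟨-p / q, ?_⟩ hs
    rw [Algebra.smul_def, Algebra.smul_def, mul_one] at h
    rw [map_div₀, map_neg, div_eq_iff (by simpa using hq)]
    linear_combination -h

theorem exists_eq_algebraMap_add_algebraMap_mul (hdim : Module.finrank L L' = 2)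
    (hs : s ∉ Set.range (algebraMap L L')) (y : L') :
    ∃ p q : L, y = algebraMap L L' p + algebraMap L L' q * s := by
  have hspan := (linearIndependent_one_of_notMem_range hs).span_eq_top_of_card_eq_finrank
    (by simp [hdim])
  have hy : y ∈ Submodule.span L {1, s} := by
    rw [← range_cons_cons_empty 1 s ![], hspan]
    exact Submodule.mem_top
  obtain ⟨p, q, h⟩ := Submodule.mem_span_pair.1 hy
  exact ⟨p, q, by rw [← h, Algebra.smul_def, Algebra.smul_def, mul_one]⟩

theorem eq_zero_of_algebraMap_add_algebraMap_mul_eq_zero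
    (hs : s ∉ Set.range (algebraMap L L')) {p q : L}
    (h : algebraMap L L' p + algebraMap L L' q * s = 0) : p = 0 ∧ q = 0 := by
  have hli : LinearIndependent L ![1, s] := linearIndependent_one_of_notMem_range hs
  apply LinearIndependent.pair_iff.1 hli
  rw [Algebra.smul_def, Algebra.smul_def, mul_one]
  exact h

end QuadraticExtension

theorem rank_four_descent_general
    (L : Type) [Field L] (h2 : (2 : L) ≠ 0)
    (d : L) (hd0 : d ≠ 0) (hd : ¬∃ c : L, c ^ 2 = d)
    (L' : Type) [Field L'] [Algebra L L']
    (hdim : Module.finrank L L' = 2)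
    (s : L') (hs : s ^ 2 = algebraMap L L' d)
    (a : Fin 4 → L)
    (hdet : ∃ c : L, c ≠ 0 ∧ a 0 * a 1 * a 2 * a 3 = d * c ^ 2)
    (hiso : ∃ x : Fin 4 → L', x ≠ 0 ∧ ∑ i, algebraMap L L' (a i) * x i ^ 2 = 0) :
    ∃ x : Fin 4 → L, x ≠ 0 ∧ ∑ i, a i * x i ^ 2 = 0 := by
  have hsL : s ∉ Set.range (algebraMap L L') := by
    rintro ⟨c, rfl⟩
    exact hd ⟨c, (algebraMap L L').injective (by rw [map_pow, hs])⟩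
  obtain ⟨x, hx0, hxq⟩ := hiso
  choose u v huv using fun i => exists_eq_algebraMap_add_algebraMap_mul hdim hsL (x i)
  obtain ⟨hq, huv₂⟩ := eq_zero_of_algebraMap_add_algebraMap_mul_eq_zero hsL <| by
    rw [← diagForm_algebraMap_add_mul a u v hs, ← funext huv]
    exact hxq
  obtain ⟨c, -, hc⟩ := hdet
  by_cases hu : diagForm a u = 0
  · by_cases hu0 : u = 0
    · refine ⟨v, fun hv0 => hx0 (funext fun i => by simp [huv, hu0, hv0]), ?_⟩
      show diagForm a v = 0
      simpa [hu, hd0] using hq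
    · exact ⟨u, hu0, hu⟩
  · exact exists_diagForm_eq_zero_of_orthogonal_pair hc hq
      ((mul_eq_zero.1 huv₂).resolve_left h2) hu

/-- Let `L` be a field of characteristic `≠ 2`, `d ∈ L×` a non-square and `L' = L(√d)` (a
quadratic extension generated by a square root `s` of `d`). Let `q` be a rank 4
nondegenerate quadratic form over `L` with determinant class `d` modulo squares. If `q`
becomes isotropic over `L'`, then `q` is isotropic over `L`. -/
theorem rank_four_descent
    (L : Type) [Field L] (h2 : (2 : L) ≠ 0)
    (d : L) (hd0 : d ≠ 0) (hd : ¬∃ c : L, c ^ 2 = d)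
    (L' : Type) [Field L'] [Algebra L L']
    (hdim : Module.finrank L L' = 2)
    (s : L') (hs : s ^ 2 = algebraMap L L' d)
    (a : Fin 4 → L) (ha : ∀ i, a i ≠ 0)
    (hdet : ∃ c : L, c ≠ 0 ∧ a 0 * a 1 * a 2 * a 3 = d * c ^ 2)
    (hiso : ∃ x : Fin 4 → L', x ≠ 0 ∧ ∑ i, algebraMap L L' (a i) * x i ^ 2 = 0) :
    ∃ x : Fin 4 → L, x ≠ 0 ∧ ∑ i, a i * x i ^ 2 = 0 :=
  rank_four_descent_general L h2 d hd0 hd L' hdim s hs a hdet hiso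
end

section
/- Let O be a 1-dimensional Noetherian local domain with fraction field F, whose normalization O' in F is a finitely generated O-module. Let O_v ⊆ F be a discrete valuation ring with fraction field F containing O such that the maximal ideal of O_v contracts to the maximal ideal of O. Then O_v equals the localization of O' at the prime O' ∩ m_v; in particular O' ⊆ O_v. -/
/-!
The normalization `O'` is a Dedekind domain with fraction field `F`: it is Noetherian as a
finitely generated `O`-algebra, has dimension at most one as an integral extension of `O`, and
is integrally closed. Being integral over `O ⊆ O_v`, it lies in the integrally closed ring `O_v`.
The localization of `O'` at `P = O' ∩ m_v` is a valuation ring of `F` (a discrete valuation ring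
if `P ≠ 0`, and `F` itself if `P = 0`) dominated by `O_v`; since valuation rings are maximal for
domination, it is `O_v`.
-/

/-- The maximal ideal of a valuation subring `Ov` of a field `F` (with fraction field `F`),
viewed as a set of elements of `F`: the nonzero elements of `Ov` whose inverse is not in
`Ov`, together with `0`. -/
def mvSet {F : Type} [Field F] (Ov : Subring F) : Set F :=
  {x : F | x ∈ Ov ∧ (x = 0 ∨ x⁻¹ ∉ Ov)}

open IsLocalRing

variable {K : Type*} [Field K]

theorem Ring.DimensionLEOne.of_ringKrullDim_le_one {R : Type*} [CommRing R] [IsDomain R]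
    (h : ringKrullDim R ≤ 1) : Ring.DimensionLEOne R :=
  have : Ring.KrullDimLE 1 R := Ring.krullDimLE_iff.mpr h
  ⟨fun hp hpp ↦ hpp.isMaximal_of_ne_bot hp⟩

theorem integralClosure.isDedekindDomain_of_fg {R : Type*} [CommRing R] [IsDomain R]
    [IsNoetherianRing R] [Ring.DimensionLEOne R] [Algebra R K] [IsFractionRing R K]
    (h : (integralClosure R K).FG) : IsDedekindDomain (integralClosure R K) :=
  have : IsNoetherianRing (integralClosure R K) := isNoetherianRing_of_fg h
  have : IsIntegrallyClosed (integralClosure R K) := isIntegrallyClosedOfFiniteExtension K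
  { }

theorem ValuationSubring.integralClosure_le (V : ValuationSubring K) {R : Subring K}
    (h : R ≤ V.toSubring) : (integralClosure R K).toSubring ≤ V.toSubring := by
  intro x hx
  let : Algebra R V := (Subring.inclusion h).toAlgebra
  have : IsScalarTower R V K := .of_algebraMap_eq fun _ ↦ rfl
  obtain ⟨y, rfl⟩ := IsIntegrallyClosed.isIntegral_iff.mp (IsIntegral.tower_top (A := V) hx)
  exact y.2

theorem LocalSubring.mem_ofPrime_iff {A : Subring K} (P : Ideal A) [P.IsPrime] {x : K} :
    x ∈ (ofPrime A P).toSubring ↔ ∃ a s : A, s ∉ P ∧ x = a / s := by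
  have ne_zero {s : A} (hs : s ∉ P) : (s : K) ≠ 0 := fun h ↦
    hs ((ZeroMemClass.coe_eq_zero.mp h) ▸ P.zero_mem)
  simp only [ofPrime, range_toSubring]
  constructor
  · rintro ⟨y, rfl⟩
    obtain ⟨a, s, rfl⟩ := IsLocalization.exists_mk'_eq P.primeCompl y
    refine ⟨a, s, s.2, ?_⟩
    rw [IsLocalization.lift_mk'_spec, Subring.coe_subtype, mul_div_cancel₀ _ (ne_zero s.2)]
  · rintro ⟨a, s, hs, rfl⟩
    refine ⟨IsLocalization.mk' _ a (⟨s, hs⟩ : P.primeCompl), ?_⟩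
    rw [IsLocalization.lift_mk'_spec, Subring.coe_subtype, mul_div_cancel₀ _ (ne_zero hs)]

theorem LocalSubring.ofPrime_le_toLocalSubring {V : ValuationSubring K} {A : Subring K}
    (h : A ≤ V.toSubring) (P : Ideal A) [P.IsPrime]
    (hP : (maximalIdeal V).comap (Subring.inclusion h) = P) :
    ofPrime A P ≤ V.toLocalSubring := by
  have hle : (ofPrime A P).toSubring ≤ V.toSubring := by
    intro x hx
    obtain ⟨a, s, hs, rfl⟩ := (mem_ofPrime_iff P).mp hx
    have hs' : (s : K) ∉ V.nonunits := fun h' ↦ hs (hP ▸ V.coe_mem_nonunits_iff.mp h')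
    rw [ValuationSubring.mem_nonunits_iff_or, not_or, not_not] at hs'
    exact div_eq_mul_inv (a : K) s ▸ V.mul_mem _ _ (h a.2) hs'.2
  refine ⟨hle, ((local_hom_TFAE _).out 2 0).mp ?_⟩
  rw [← IsLocalization.AtPrime.map_eq_maximalIdeal P, Ideal.map_map, Ideal.map_le_iff_le_comap]
  exact hP.ge

theorem LocalSubring.isMax_ofPrime {A : Subring K} [IsDedekindDomain A] [IsFractionRing A K]
    (P : Ideal A) [P.IsPrime] : IsMax (ofPrime A P) := by
  refine isMax_iff.mpr ⟨⟨(ofPrime A P).toSubring, fun x ↦ ?_⟩, rfl⟩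
  rcases eq_or_ne P ⊥ with rfl | hP
  · obtain ⟨a, s, hs, rfl⟩ := IsFractionRing.div_surjective (A := A) x
    exact .inl ((mem_ofPrime_iff ⊥).mpr ⟨a, s, by simpa using nonZeroDivisors.ne_zero hs, rfl⟩)
  have : IsDiscreteValuationRing (ofPrime A P).toSubring :=
    IsLocalization.AtPrime.isDiscreteValuationRing_of_dedekind_domain A hP _
  have : IsFractionRing (ofPrime A P).toSubring K :=
    .isFractionRing_of_isDomain_of_isLocalization P.primeCompl _ _
  rcases ValuationRing.isInteger_or_isInteger (ofPrime A P).toSubring x with ⟨y, rfl⟩ | ⟨y, hy⟩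
  · exact .inl y.2
  · exact .inr (hy ▸ y.2)

section Dedekind

variable {V : ValuationSubring K} {A : Subring K} [IsDedekindDomain A] [IsFractionRing A K]

theorem ValuationSubring.toLocalSubring_eq_ofPrime (h : A ≤ V.toSubring) :
    V.toLocalSubring = LocalSubring.ofPrime A ((maximalIdeal V).comap (Subring.inclusion h)) :=
  ((LocalSubring.isMax_ofPrime _).eq_of_le (LocalSubring.ofPrime_le_toLocalSubring h _ rfl)).symm

theorem ValuationSubring.mem_iff_exists_div (h : A ≤ V.toSubring) {x : K} :
    x ∈ V ↔ ∃ a s : K, a ∈ A ∧ s ∈ A ∧ s ∉ V.nonunits ∧ x = a / s := by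
  change x ∈ V.toLocalSubring.toSubring ↔ _
  rw [V.toLocalSubring_eq_ofPrime h, LocalSubring.mem_ofPrime_iff]
  constructor
  · rintro ⟨a, s, hs, rfl⟩
    exact ⟨a, s, a.2, s.2, fun hs' ↦ hs (V.coe_mem_nonunits_iff.mp hs'), rfl⟩
  · rintro ⟨a, s, ha, hs, hs', rfl⟩
    exact ⟨⟨a, ha⟩, ⟨s, hs⟩, fun hs'' ↦ hs' (V.coe_mem_nonunits_iff.mpr hs''), rfl⟩

end Dedekind

theorem mvSet_eq_nonunits {F : Type} [Field F] (V : ValuationSubring F) :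
    mvSet V.toSubring = V.nonunits := by
  ext x
  rw [SetLike.mem_coe, V.mem_nonunits_iff_or]
  exact ⟨fun h ↦ h.2, fun h ↦ ⟨V.nonunits_subset (V.mem_nonunits_iff_or.mpr h), h⟩⟩

theorem dvr_eq_localization_of_normalization_general
    (F : Type) [Field F]
    (O : Subring F) [IsNoetherianRing ↥O]
    (hdim : ringKrullDim ↥O = 1)
    (hfracO : ∀ x : F, ∃ p q : F, p ∈ O ∧ q ∈ O ∧ q ≠ 0 ∧ x = p / q)
    (hfin : (integralClosure (↥O) F).FG)
    (Ov : Subring F)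
    (hval : ∀ x : F, x ≠ 0 → x ∈ Ov ∨ x⁻¹ ∈ Ov)
    (hOle : O ≤ Ov) :
    (↑(Subalgebra.toSubring (integralClosure (↥O) F)) : Set F) ⊆ (Ov : Set F) ∧
      (Ov : Set F) =
        {x : F | ∃ p q : F, p ∈ Subalgebra.toSubring (integralClosure (↥O) F) ∧
          q ∈ Subalgebra.toSubring (integralClosure (↥O) F) ∧
          q ∉ mvSet Ov ∧ x = p / q} := by
  let V : ValuationSubring F := .ofSubring Ov fun x ↦
    (eq_or_ne x 0).elim (fun hx ↦ .inl (hx ▸ Ov.zero_mem)) (hval x)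
  have hmv : mvSet Ov = V.nonunits := mvSet_eq_nonunits V
  have : IsFractionRing O F := .of_field O F fun z ↦ by
    obtain ⟨p, q, hp, hq, -, rfl⟩ := hfracO z
    exact ⟨⟨p, hp⟩, ⟨q, hq⟩, rfl⟩
  have : Ring.DimensionLEOne O := .of_ringKrullDim_le_one hdim.le
  set A := (integralClosure O F).toSubring
  have : IsDedekindDomain A := integralClosure.isDedekindDomain_of_fg hfin
  have : IsFractionRing A F := inferInstanceAs (IsFractionRing (integralClosure O F) F)
  have hAV : A ≤ V.toSubring := V.integralClosure_le hOle
  refine ⟨hAV, Set.ext fun x ↦ ?_⟩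
  rw [hmv]
  exact V.mem_iff_exists_div hAV

/-- Let `O` be a 1-dimensional Noetherian local domain with fraction field `F` whose
normalization `O'` in `F` is a finitely generated `O`-module. Let `Ov ⊆ F` be a discrete
valuation ring with fraction field `F` containing `O`, whose maximal ideal contracts to the
maximal ideal of `O`. Then `O' ⊆ Ov` and `Ov` equals the localization of `O'` at the prime
`O' ∩ m_v`. -/
theorem dvr_eq_localization_of_normalization
    (F : Type) [Field F]
    (O : Subring F) [IsNoetherianRing ↥O] [IsLocalRing ↥O]
    (hdim : ringKrullDim ↥O = 1)
    (hfracO : ∀ x : F, ∃ p q : F, p ∈ O ∧ q ∈ O ∧ q ≠ 0 ∧ x = p / q)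
    (hfin : (integralClosure (↥O) F).FG)
    (Ov : Subring F) [IsDiscreteValuationRing ↥Ov]
    (hval : ∀ x : F, x ≠ 0 → x ∈ Ov ∨ x⁻¹ ∈ Ov)
    (hOle : O ≤ Ov)
    -- the maximal ideal of `Ov` contracts to the maximal ideal of `O`:
    (hcontr : ∀ x : F, x ∈ O → (x ∈ mvSet Ov ↔ ¬∃ y ∈ O, x * y = 1)) :
    (↑(Subalgebra.toSubring (integralClosure (↥O) F)) : Set F) ⊆ (Ov : Set F) ∧
      (Ov : Set F) =
        {x : F | ∃ p q : F, p ∈ Subalgebra.toSubring (integralClosure (↥O) F) ∧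
          q ∈ Subalgebra.toSubring (integralClosure (↥O) F) ∧
          q ∉ mvSet Ov ∧ x = p / q} :=
  dvr_eq_localization_of_normalization_general F O hdim hfracO hfin Ov hval hOle
end
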